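/- Projection-support lemma (core step in the proof of Theorem 1): Let P ∈ ℂ^{B×B} be an orthogonal projection (P = P^H = P²), let C ∈ ℂ^{B×B} be Hermitian positive semidefinite with PC = CP, let σ > 0, and let B₀ ∈ ℂ^{B×N} satisfy P B₀ = B₀. Define f(W) = tr(W^H (C + σI) W) − 2·Re tr(B₀^H W). Then for every W ∈ ℂ^{B×N}: f(W) − f(PW) = tr( ((I−P)W)^H (C + σI) (I−P)W ) ≥ σ·tr( ((I−P)W)^H (I−P)W ) ≥ 0. Consequently, every minimizer W of f satisfies PW = W, i.e. the optimal detector is supported on the range of P. -/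
import Mathlib


open Matrix
open scoped ComplexOrder

private lemma trace_re_nonneg_of_psd {n : ℕ} {A : Matrix (Fin n) (Fin n) ℂ}
    (hA : A.PosSemidef) : 0 ≤ (Matrix.trace A).re := by
  rw [Matrix.trace]
  rw [Complex.re_sum]
  apply Finset.sum_nonneg
  intro i _
  have := hA.re_dotProduct_nonneg (Pi.single i 1)
  simpa [dotProduct, Matrix.mulVec_single, Pi.single_apply, Matrix.diag] using this

private lemma eq_zero_of_trace_re {n m : ℕ} (X : Matrix (Fin n) (Fin m) ℂ)
    (h : (Matrix.trace (Xᴴ * X)).re = 0) : X = 0 := by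
  have htr : (Matrix.trace (Xᴴ * X)).re
      = ∑ j, ∑ i, Complex.normSq (X i j) := by
    rw [Matrix.trace, Complex.re_sum]
    congr 1; ext j
    simp only [Matrix.diag, Matrix.mul_apply, Matrix.conjTranspose_apply, Complex.re_sum]
    congr 1; ext i
    simp [Complex.normSq_apply, RCLike.star_def, Complex.mul_re]
  rw [htr] at h
  ext i j
  have h1 : ∀ j ∈ Finset.univ, (0:ℝ) ≤ ∑ i, Complex.normSq (X i j) := by
    intro j _
    exact Finset.sum_nonneg fun i _ => Complex.normSq_nonneg _
  have h2 := (Finset.sum_eq_zero_iff_of_nonneg h1).mp h j (Finset.mem_univ j)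
  have h3 : ∀ i ∈ Finset.univ, (0:ℝ) ≤ Complex.normSq (X i j) :=
    fun i _ => Complex.normSq_nonneg _
  have h4 := (Finset.sum_eq_zero_iff_of_nonneg h3).mp h2 i (Finset.mem_univ i)
  simpa using Complex.normSq_eq_zero.mp h4

/-- Projection-support lemma (core step in the proof of Theorem 1): for an
orthogonal projection `P`, a Hermitian positive semidefinite `C` commuting
with `P`, `σ > 0` and `B₀` with `P B₀ = B₀`, the functional
`f(W) = tr(Wᴴ (C + σI) W) − 2 Re tr(B₀ᴴ W)` satisfies
`f(W) − f(PW) = tr(((I−P)W)ᴴ (C + σI) (I−P)W) ≥ σ tr(((I−P)W)ᴴ (I−P)W) ≥ 0`,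
and consequently every minimizer `W` of `f` satisfies `PW = W`. -/
theorem projection_support_lemma (B N : ℕ)
    (P C : Matrix (Fin B) (Fin B) ℂ)
    (hPherm : Pᴴ = P) (hPidem : P * P = P)
    (hC : C.PosSemidef) (hPC : P * C = C * P)
    (σ : ℝ) (hσ : 0 < σ)
    (B₀ : Matrix (Fin B) (Fin N) ℂ) (hB₀ : P * B₀ = B₀) :
    (∀ W : Matrix (Fin B) (Fin N) ℂ,
      ((Matrix.trace (Wᴴ * (C + (σ : ℂ) • 1) * W)).re
          - 2 * (Matrix.trace (B₀ᴴ * W)).re)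
        - ((Matrix.trace ((P * W)ᴴ * (C + (σ : ℂ) • 1) * (P * W))).re
          - 2 * (Matrix.trace (B₀ᴴ * (P * W))).re)
      = (Matrix.trace (((1 - P) * W)ᴴ * (C + (σ : ℂ) • 1) * ((1 - P) * W))).re) ∧
    (∀ W : Matrix (Fin B) (Fin N) ℂ,
      σ * (Matrix.trace (((1 - P) * W)ᴴ * ((1 - P) * W))).re ≤
        (Matrix.trace (((1 - P) * W)ᴴ * (C + (σ : ℂ) • 1) * ((1 - P) * W))).re) ∧
    (∀ W : Matrix (Fin B) (Fin N) ℂ,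
      0 ≤ σ * (Matrix.trace (((1 - P) * W)ᴴ * ((1 - P) * W))).re) ∧
    (∀ W : Matrix (Fin B) (Fin N) ℂ,
      (∀ W' : Matrix (Fin B) (Fin N) ℂ,
        (Matrix.trace (Wᴴ * (C + (σ : ℂ) • 1) * W)).re
            - 2 * (Matrix.trace (B₀ᴴ * W)).re ≤
          (Matrix.trace (W'ᴴ * (C + (σ : ℂ) • 1) * W')).re
            - 2 * (Matrix.trace (B₀ᴴ * W')).re) →
      P * W = W) := by
  set M : Matrix (Fin B) (Fin B) ℂ := C + (σ : ℂ) • 1 with hM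
  have hPM : P * M = M * P := by
    simp only [hM, Matrix.mul_add, Matrix.add_mul, hPC]
    congr 1
    rw [Matrix.mul_smul, Matrix.smul_mul, Matrix.mul_one, Matrix.one_mul]
  -- quadratic identity
  have hquad : ∀ W : Matrix (Fin B) (Fin N) ℂ,
      Wᴴ * M * W - (P * W)ᴴ * M * (P * W)
        = ((1 - P) * W)ᴴ * M * ((1 - P) * W) := by
    intro W
    have h1 : ((1 - P) : Matrix (Fin B) (Fin B) ℂ)ᴴ = 1 - P := by
      simp [hPherm]
    have hPMP : P * M * P = M * P := by
      rw [hPM, Matrix.mul_assoc, hPidem]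
    have hMPP : M * P * P = M * P := by rw [Matrix.mul_assoc, hPidem]
    have key : M - P * M * P = (1 - P) * M * (1 - P) := by
      rw [hPMP]
      simp only [Matrix.sub_mul, Matrix.mul_sub, Matrix.one_mul, Matrix.mul_one, hPM, hMPP]
      abel
    calc Wᴴ * M * W - (P * W)ᴴ * M * (P * W)
        = Wᴴ * (M - P * M * P) * W := by
          rw [Matrix.conjTranspose_mul, hPherm]
          simp only [Matrix.sub_mul, Matrix.mul_sub, Matrix.mul_assoc]
      _ = ((1 - P) * W)ᴴ * M * ((1 - P) * W) := by
          rw [key, Matrix.conjTranspose_mul, h1]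
          simp only [Matrix.mul_assoc]
  -- linear term invariance
  have hlin : ∀ W : Matrix (Fin B) (Fin N) ℂ,
      Matrix.trace (B₀ᴴ * (P * W)) = Matrix.trace (B₀ᴴ * W) := by
    intro W
    have : B₀ᴴ * P = B₀ᴴ := by
      calc B₀ᴴ * P = B₀ᴴ * Pᴴ := by rw [hPherm]
        _ = (P * B₀)ᴴ := by rw [Matrix.conjTranspose_mul]
        _ = B₀ᴴ := by rw [hB₀]
    rw [← Matrix.mul_assoc, this]
  have part1 : ∀ W : Matrix (Fin B) (Fin N) ℂ,
      ((Matrix.trace (Wᴴ * M * W)).re - 2 * (Matrix.trace (B₀ᴴ * W)).re)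
        - ((Matrix.trace ((P * W)ᴴ * M * (P * W))).re
          - 2 * (Matrix.trace (B₀ᴴ * (P * W))).re)
      = (Matrix.trace (((1 - P) * W)ᴴ * M * ((1 - P) * W))).re := by
    intro W
    rw [hlin W]
    have : Matrix.trace (Wᴴ * M * W) - Matrix.trace ((P * W)ᴴ * M * (P * W))
        = Matrix.trace (((1 - P) * W)ᴴ * M * ((1 - P) * W)) := by
      rw [← Matrix.trace_sub, hquad W]
    have hre := congrArg Complex.re this
    rw [Complex.sub_re] at hre
    linarith
  have part2 : ∀ W : Matrix (Fin B) (Fin N) ℂ,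
      σ * (Matrix.trace (((1 - P) * W)ᴴ * ((1 - P) * W))).re ≤
        (Matrix.trace (((1 - P) * W)ᴴ * M * ((1 - P) * W))).re := by
    intro W
    set X := (1 - P) * W with hX
    have hexp : Xᴴ * M * X = Xᴴ * C * X + (σ : ℂ) • (Xᴴ * X) := by
      simp only [hM, Matrix.mul_add, Matrix.add_mul, Matrix.mul_smul, Matrix.smul_mul,
        Matrix.mul_one]
    rw [hexp, Matrix.trace_add, Matrix.trace_smul, Complex.add_re]
    have hre : ((σ : ℂ) • Matrix.trace (Xᴴ * X)).re
        = σ * (Matrix.trace (Xᴴ * X)).re := by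
      simp [Complex.smul_re]
    rw [hre]
    have hpsd : (Xᴴ * C * X).PosSemidef := hC.conjTranspose_mul_mul_same X
    have := trace_re_nonneg_of_psd hpsd
    linarith
  have part3 : ∀ W : Matrix (Fin B) (Fin N) ℂ,
      0 ≤ σ * (Matrix.trace (((1 - P) * W)ᴴ * ((1 - P) * W))).re := by
    intro W
    have := trace_re_nonneg_of_psd (Matrix.posSemidef_conjTranspose_mul_self ((1 - P) * W))
    positivity
  refine ⟨part1, part2, part3, ?_⟩
  intro W hmin
  have h1 := hmin (P * W)
  have h2 := part1 W
  have h3 := part2 W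
  have h4 := part3 W
  have ht : (Matrix.trace (((1 - P) * W)ᴴ * ((1 - P) * W))).re = 0 := by
    nlinarith
  have hzero : (1 - P) * W = 0 := eq_zero_of_trace_re _ ht
  have : W - P * W = 0 := by
    rw [Matrix.sub_mul, Matrix.one_mul] at hzero
    exact hzero
  exact (sub_eq_zero.mp this).symm
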